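/- arXiv:2604.03904 — 4 statements merged into one kernel-verified Lean document; each statement's English description precedes it below -/
import Mathlib

section
/- Let n be a natural number, let r, θ ∈ [0,1] with r ≤ θ, and define the one-sided p-value p(k) := F_{n,r-tail}(k) = Σ_{j=0}^{k} (n choose j) r^j (1−r)^{n−j} for k ∈ {0,…,n}. If K is distributed according to the Binomial(n, θ) distribution (e.g. the Mathlib binomial PMF with success probability θ), then for every α ∈ [0,1], Pr(p(K) ≤ α) ≤ α. That is, the exact one-sided binomial p-value for testing the null hypothesis θ ≥ r is valid (superuniform) under the null. -/
/-!
The event `{p(K) ≤ α}` is contained in `{K ≤ m}` for its largest element `m`. Under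
`Binomial(n, θ)` that event has probability `F_{n,m}(θ) ≤ F_{n,m}(r) = p(m) ≤ α`, because
`t ↦ F_{n,m}(t)` is antitone on `[0, 1]`: it is a partial sum of Bernstein polynomials, whose
derivative telescopes to `-n` times the Bernstein polynomial `C(n-1,m) t^m (1-t)^(n-1-m) ≥ 0`.
-/

open MeasureTheory Finset Polynomial

theorem bernsteinPolynomial.derivative_sum_range {R : Type*} [CommRing R] (n k : ℕ) :
    derivative (∑ ν ∈ range (k + 1), bernsteinPolynomial R n ν) =
      -n * bernsteinPolynomial R (n - 1) k := by
  induction k with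
  | zero => simp [bernsteinPolynomial.derivative_zero]
  | succ k ih =>
    rw [sum_range_succ, derivative_add, ih, bernsteinPolynomial.derivative_succ]
    ring

theorem bernsteinPolynomial.eval_sum_range {R : Type*} [CommRing R] (n k : ℕ) (t : R) :
    (∑ ν ∈ range (k + 1), bernsteinPolynomial R n ν).eval t =
      ∑ j ∈ range (k + 1), (n.choose j : R) * t ^ j * (1 - t) ^ (n - j) := by
  simp [eval_finsetSum, bernsteinPolynomial]

theorem antitoneOn_sum_choose_mul_pow_mul_pow (n k : ℕ) :
    AntitoneOn (fun t : ℝ ↦ ∑ j ∈ range (k + 1), (n.choose j : ℝ) * t ^ j * (1 - t) ^ (n - j))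
      (Set.Icc 0 1) := by
  simp_rw [← bernsteinPolynomial.eval_sum_range]
  refine antitoneOn_of_deriv_nonpos (convex_Icc 0 1) (Polynomial.continuousOn _)
    (Polynomial.differentiableOn _) fun t ht ↦ ?_
  rw [interior_Icc] at ht
  have ht₀ : 0 ≤ t := ht.1.le
  have ht₁ : 0 ≤ 1 - t := by linarith [ht.2]
  rw [Polynomial.deriv, bernsteinPolynomial.derivative_sum_range, neg_mul, eval_neg,
    neg_nonpos, eval_mul, eval_natCast]
  simp only [bernsteinPolynomial, eval_mul, eval_pow, eval_sub, eval_one, eval_X, eval_natCast]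
  positivity

theorem measureReal_setOf_le_le_of_measureReal_Iic_le {ι : Type*} [LinearOrder ι] [Finite ι]
    [MeasurableSpace ι] (μ : Measure ι) [IsFiniteMeasure μ] (p : ι → ℝ)
    (hp : ∀ m, μ.real (Set.Iic m) ≤ p m) {α : ℝ} (hα : 0 ≤ α) :
    μ.real {k | p k ≤ α} ≤ α := by
  obtain hempty | hne := {k | p k ≤ α}.eq_empty_or_nonempty
  · simpa [hempty] using hα
  obtain ⟨m, hm, hmax⟩ := Set.exists_max_image _ id (Set.toFinite _) hne
  calc μ.real {k | p k ≤ α} ≤ μ.real (Set.Iic m) := measureReal_mono fun k hk ↦ hmax k hk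
    _ ≤ p m := hp m
    _ ≤ α := hm

theorem PMF.binomial_toMeasure_real_Iic (p : NNReal) (h : p ≤ 1) (n : ℕ) (m : Fin (n + 1)) :
    (PMF.binomial p h n).toMeasure.real (Set.Iic m) =
      ∑ j ∈ range ((m : ℕ) + 1), (n.choose j : ℝ) * (p : ℝ) ^ j * (1 - (p : ℝ)) ^ (n - j) := by
  rw [measureReal_def, ← coe_Iic, PMF.toMeasure_apply_finset,
    ENNReal.toReal_sum fun _ _ ↦ PMF.apply_ne_top _ _, Nat.range_succ_eq_Iic,
    ← Fin.map_valEmbedding_Iic, sum_map]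
  refine sum_congr rfl fun k _ ↦ ?_
  rw [Fin.valEmbedding_apply, PMF.binomial_apply, Fin.val_last, ← ENNReal.coe_one,
    ← ENNReal.coe_sub]
  simp only [ENNReal.toReal_mul, ENNReal.toReal_pow, ENNReal.coe_toReal, ENNReal.toReal_natCast,
    NNReal.coe_sub h, NNReal.coe_one]
  ring

/-- **Validity (superuniformity) of the exact one-sided binomial p-value.**
If `K ~ Binomial(n, θ)` with `θ ≥ r`, then the one-sided p-value
`p(k) = ∑_{j=0}^{k} C(n,j) r^j (1-r)^(n-j)` satisfies `Pr(p(K) ≤ α) ≤ α`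
for every `α ∈ [0,1]`. -/
theorem binomial_pvalue_superuniform
    (n : ℕ) (r θ : ℝ) (hr : r ∈ Set.Icc (0 : ℝ) 1) (hθ : θ ∈ Set.Icc (0 : ℝ) 1)
    (hrθ : r ≤ θ) (α : ℝ) (hα : α ∈ Set.Icc (0 : ℝ) 1) :
    ((PMF.binomial (Real.toNNReal θ) (Real.toNNReal_le_one.mpr hθ.2) n).toMeasure
        {k : Fin (n + 1) |
          ∑ j ∈ Finset.range ((k : ℕ) + 1), (n.choose j : ℝ) * r ^ j * (1 - r) ^ (n - j)
            ≤ α}).toReal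
      ≤ α := by
  refine measureReal_setOf_le_le_of_measureReal_Iic_le _ _ (fun m ↦ ?_) hα.1
  rw [PMF.binomial_toMeasure_real_Iic, Real.coe_toNNReal _ hθ.1]
  exact antitoneOn_sum_choose_mul_pow_mul_pow n m hr hθ hrθ
end

section
/- Let n be a natural number, let α ∈ (0,1), and let θ ∈ [0,1]. For k ∈ {0,…,n} define the Clopper–Pearson upper bound U(k) := 1 if k = n, and U(k) := sSup { t ∈ [0,1] : Σ_{j=0}^{k} (n choose j) t^j (1−t)^{n−j} ≥ α } if k < n. If K is distributed according to the Binomial(n, θ) distribution, then Pr(θ ≤ U(K)) ≥ 1 − α; that is, the one-sided Clopper–Pearson upper confidence bound at level 1 − α covers the true success probability with probability at least 1 − α. -/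
/-!
A count `k` can be excluded from the confidence set `{k | θ ≤ U(k)}` only if `F_{n,k}(θ) < α`,
since otherwise `θ` belongs to the set whose supremum is `U(k)`. Every excluded count is at most
the largest one, `m`, so the excluded counts have probability at most
`Pr(K ≤ m) = F_{n,m}(θ) < α`.
-/

open MeasureTheory

set_option linter.deprecated false

noncomputable def binomialLowerTail (n k : ℕ) (t : ℝ) : ℝ :=
  ∑ j ∈ Finset.range (k + 1), (n.choose j : ℝ) * t ^ j * (1 - t) ^ (n - j)

noncomputable def clopperPearsonUpper (n : ℕ) (α : ℝ) (k : ℕ) : ℝ :=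
  if k = n then 1 else sSup {t : ℝ | t ∈ Set.Icc (0 : ℝ) 1 ∧ α ≤ binomialLowerTail n k t}

theorem MeasureTheory.measure_le_of_forall_measure_Iic_le {ι : Type*} [LinearOrder ι]
    [MeasurableSpace ι] (μ : Measure ι) {B : Set ι} (hB : B.Finite) {a : ENNReal}
    (h : ∀ k ∈ B, μ (Set.Iic k) ≤ a) : μ B ≤ a := by
  rcases B.eq_empty_or_nonempty with rfl | hne
  · simp
  obtain ⟨m, hm, hmax⟩ := Set.exists_max_image B id hB hne
  exact (measure_mono fun k hk => hmax k hk).trans (h m hm)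

theorem PMF.binomial_apply_eq_ofReal (p : NNReal) (h : p ≤ 1) (n : ℕ) (i : Fin (n + 1)) :
    PMF.binomial p h n i =
      ENNReal.ofReal (n.choose i * (p : ℝ) ^ (i : ℕ) * (1 - p) ^ (n - i)) := by
  rw [PMF.binomial_apply_of_le (Nat.lt_succ_iff.mp i.isLt) h]
  simp

theorem PMF.binomial_toMeasure_Iic (p : NNReal) (h : p ≤ 1) (n : ℕ) (k : Fin (n + 1)) :
    (PMF.binomial p h n).toMeasure (Set.Iic k) = ENNReal.ofReal (binomialLowerTail n k p) := by
  have hp : (p : ℝ) ≤ 1 := h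
  rw [← Finset.coe_Iic, PMF.toMeasure_apply_finset, binomialLowerTail, Nat.range_succ_eq_Iic,
    ← Fin.map_valEmbedding_Iic, Finset.sum_map, ENNReal.ofReal_sum_of_nonneg]
  · simp only [PMF.binomial_apply_eq_ofReal, Fin.valEmbedding_apply]
  · intro j _
    have : (0:ℝ) ≤ 1 - p := by linarith
    positivity

theorem binomialLowerTail_lt_of_clopperPearsonUpper_lt {n : ℕ} {α θ : ℝ} {k : ℕ}
    (hθ : θ ∈ Set.Icc (0 : ℝ) 1) (h : clopperPearsonUpper n α k < θ) :
    binomialLowerTail n k θ < α := by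
  unfold clopperPearsonUpper at h
  split_ifs at h
  · exact absurd hθ.2 h.not_ge
  · by_contra! hα
    exact h.not_ge (le_csSup ⟨1, fun t ht => ht.1.2⟩ ⟨hθ, hα⟩)

/-- **Coverage of the one-sided Clopper–Pearson upper confidence bound.**
For `K ~ Binomial(n, θ)` and `α ∈ (0,1)`, the Clopper–Pearson upper bound
`U(k) = 1` if `k = n` and `U(k) = sSup {t ∈ [0,1] : F_{n,k}(t) ≥ α}` if `k < n`
covers the true success probability: `Pr(θ ≤ U(K)) ≥ 1 - α`. -/
theorem clopper_pearson_coverage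
    (n : ℕ) (α : ℝ) (hα : α ∈ Set.Ioo (0 : ℝ) 1)
    (θ : ℝ) (hθ : θ ∈ Set.Icc (0 : ℝ) 1) :
    1 - α ≤
      ((PMF.binomial (Real.toNNReal θ) (Real.toNNReal_le_one.mpr hθ.2) n).toMeasure
        {k : Fin (n + 1) |
          θ ≤ if (k : ℕ) = n then 1 else
            sSup {t : ℝ | t ∈ Set.Icc (0 : ℝ) 1 ∧
              α ≤ ∑ j ∈ Finset.range ((k : ℕ) + 1),
                    (n.choose j : ℝ) * t ^ j * (1 - t) ^ (n - j)}}).toReal := by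
  set μ := (PMF.binomial (Real.toNNReal θ) (Real.toNNReal_le_one.mpr hθ.2) n).toMeasure
  change 1 - α ≤ μ.real {k : Fin (n + 1) | θ ≤ clopperPearsonUpper n α k}
  have hmiss :
      μ {k : Fin (n + 1) | θ ≤ clopperPearsonUpper n α k}ᶜ ≤ ENNReal.ofReal α := by
    refine measure_le_of_forall_measure_Iic_le μ (Set.toFinite _) fun k hk => ?_
    rw [PMF.binomial_toMeasure_Iic, Real.coe_toNNReal _ hθ.1]
    exact ENNReal.ofReal_le_ofReal
      (binomialLowerTail_lt_of_clopperPearsonUpper_lt hθ (not_le.mp hk)).le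
  have hmiss_real := ENNReal.toReal_le_of_le_ofReal hα.1.le hmiss
  rw [← measureReal_def, probReal_compl_eq_one_sub MeasurableSet.of_discrete] at hmiss_real
  linarith
end

section
/- Let (Ω, 𝔽, P) be a probability space, let M, L be positive natural numbers, let δ ∈ (0,1), let a : Fin L → ℕ be prespecified starting indices with a ℓ ≤ M for all ℓ, let p : ℕ → Ω → ℝ be measurable p-value random variables, and let T : ℕ → Prop be a predicate (true nulls). Assume that for every start ℓ such that some index in [a ℓ, M] satisfies T, the least such index j⋆(ℓ) satisfies P({ω : p (j⋆(ℓ)) ω ≤ δ/L}) ≤ δ/L. Then P({ω : for every ℓ and every j with a ℓ ≤ j ≤ M, if p i ω ≤ δ/L for all i with a ℓ ≤ i ≤ j, then ¬ T j}) ≥ 1 − δ; that is, with probability at least 1 − δ, every hypothesis certified (rejected) along any of the L multistart fixed-sequence scans at per-path level δ/L is a false null, so every certified threshold is safe (Proposition 2, multistart fixed-sequence CP control). -/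
open MeasureTheory

/-- **Multistart fixed-sequence CP control (Proposition 2).** With `L`
prespecified starting indices `a ℓ ≤ M` and per-path level `δ / L`, if for each
start `ℓ` the p-value at the least true null `jstar` on the path `[a ℓ, M]` is
valid (`P(p jstar ≤ δ/L) ≤ δ/L`), then with probability at least `1 - δ`,
every hypothesis certified along any of the `L` scans (i.e. every `j` with
`p i ≤ δ/L` for all `a ℓ ≤ i ≤ j`) is a false null. -/
theorem multistart_fixed_sequence_control
    {Ω : Type*} [MeasurableSpace Ω] (P : Measure Ω) [IsProbabilityMeasure P]
    (M L : ℕ) (hM : 0 < M) (hL : 0 < L)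
    (δ : ℝ) (hδ : δ ∈ Set.Ioo (0 : ℝ) 1)
    (a : Fin L → ℕ) (ha : ∀ ℓ, a ℓ ≤ M)
    (p : ℕ → Ω → ℝ) (hp : ∀ i, Measurable (p i))
    (T : ℕ → Prop)
    (hvalid : ∀ ℓ : Fin L, ∀ jstar : ℕ,
      a ℓ ≤ jstar → jstar ≤ M → T jstar →
      (∀ i, a ℓ ≤ i → i ≤ M → T i → jstar ≤ i) →
      (P {ω | p jstar ω ≤ δ / L}).toReal ≤ δ / L) :
    1 - δ ≤ (P {ω | ∀ ℓ : Fin L, ∀ j, a ℓ ≤ j → j ≤ M →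
        (∀ i, a ℓ ≤ i → i ≤ j → p i ω ≤ δ / L) → ¬ T j}).toReal := by
  classical
  have hLpos : (0 : ℝ) < L := by exact_mod_cast hL
  -- the bad event for each start
  set B : Fin L → Set Ω := fun ℓ =>
    if h : ∃ j, a ℓ ≤ j ∧ j ≤ M ∧ T j then {ω | p (Nat.find h) ω ≤ δ / L} else ∅
    with hB
  have hBmeas : ∀ ℓ, MeasurableSet (B ℓ) := by
    intro ℓ
    rw [hB]
    by_cases h : ∃ j, a ℓ ≤ j ∧ j ≤ M ∧ T j
    · simp only [dif_pos h]
      exact measurableSet_le (hp _) measurable_const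
    · simp only [dif_neg h]
      exact MeasurableSet.empty
  have hBle : ∀ ℓ, (P (B ℓ)).toReal ≤ δ / L := by
    intro ℓ
    rw [hB]
    by_cases h : ∃ j, a ℓ ≤ j ∧ j ≤ M ∧ T j
    · simp only [dif_pos h]
      obtain ⟨h1, h2, h3⟩ := Nat.find_spec h
      exact hvalid ℓ _ h1 h2 h3 (fun i hi1 hi2 hTi => Nat.find_min' h ⟨hi1, hi2, hTi⟩)
    · simp only [dif_neg h, measure_empty, ENNReal.toReal_zero]
      exact div_nonneg hδ.1.le hLpos.le
  -- the complement of the union of bad events is contained in the good event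
  have hsub : (⋃ ℓ, B ℓ)ᶜ ⊆ {ω | ∀ ℓ : Fin L, ∀ j, a ℓ ≤ j → j ≤ M →
      (∀ i, a ℓ ≤ i → i ≤ j → p i ω ≤ δ / L) → ¬ T j} := by
    intro ω hω ℓ j hj1 hj2 hall hTj
    have hex : ∃ j, a ℓ ≤ j ∧ j ≤ M ∧ T j := ⟨j, hj1, hj2, hTj⟩
    have hωB : ω ∉ B ℓ := by
      intro hmem; exact hω (Set.mem_iUnion.mpr ⟨ℓ, hmem⟩)
    rw [hB] at hωB
    simp only [dif_pos hex, Set.mem_setOf_eq] at hωB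
    obtain ⟨hs1, hs2, hs3⟩ := Nat.find_spec hex
    have hle : Nat.find hex ≤ j := Nat.find_min' hex ⟨hj1, hj2, hTj⟩
    exact hωB (hall _ hs1 hle)
  -- measure of the union
  have hU : (P (⋃ ℓ, B ℓ)).toReal ≤ δ := by
    have h1 : P (⋃ ℓ, B ℓ) ≤ ∑ ℓ, P (B ℓ) := measure_iUnion_fintype_le P B
    have h2 : (P (⋃ ℓ, B ℓ)).toReal ≤ (∑ ℓ, P (B ℓ)).toReal := by
      apply ENNReal.toReal_mono _ h1
      exact ENNReal.sum_ne_top.mpr (fun ℓ _ => measure_ne_top P _)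
    rw [ENNReal.toReal_sum (fun ℓ _ => measure_ne_top P _)] at h2
    calc (P (⋃ ℓ, B ℓ)).toReal ≤ ∑ ℓ, (P (B ℓ)).toReal := h2
      _ ≤ ∑ _ℓ : Fin L, δ / L := Finset.sum_le_sum (fun ℓ _ => hBle ℓ)
      _ = L * (δ / L) := by simp [Finset.sum_const, mul_comm]
      _ = δ := by field_simp
  have hcompl : (P (⋃ ℓ, B ℓ)ᶜ).toReal = 1 - (P (⋃ ℓ, B ℓ)).toReal := by
    rw [measure_compl (MeasurableSet.iUnion hBmeas) (measure_ne_top P _)]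
    rw [measure_univ, ENNReal.toReal_sub_of_le prob_le_one ENNReal.one_ne_top]
    simp
  have hmono : (P (⋃ ℓ, B ℓ)ᶜ).toReal ≤ (P {ω | ∀ ℓ : Fin L, ∀ j, a ℓ ≤ j → j ≤ M →
      (∀ i, a ℓ ≤ i → i ≤ j → p i ω ≤ δ / L) → ¬ T j}).toReal := by
    apply ENNReal.toReal_mono (measure_ne_top P _) (measure_mono hsub)
  linarith
end

section
/- Let μ be a probability measure on ℝ × Bool, let n be a positive natural number, and let ν be the product measure μ^{⊗ n} on (ℝ × Bool)^n (i.e. n i.i.d. draws from μ). Fix a real u with q := μ({(x, b) : x ≤ u}) > 0 and set Rq := μ({(x, b) : x ≤ u and b = true}) / q. Then for all natural numbers m ≤ n and k ≤ m, ν({ω : #{i : ω_i.1 ≤ u} = m and #{i : ω_i.1 ≤ u and ω_i.2 = true} = k}) = ν({ω : #{i : ω_i.1 ≤ u} = m}) · (m choose k) · Rq^k · (1 − Rq)^{m−k}. That is, conditional on exactly m of the n i.i.d. examples being accepted at threshold u, the number of accepted errors is Binomial(m, Rq) distributed. -/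
open MeasureTheory
open scoped Classical ENNReal

lemma aux_pi {α : Type*} [MeasurableSpace α] (μ : Measure α) [IsProbabilityMeasure μ]
    (n : ℕ) (A : Fin n → Set α) :
    Measure.pi (fun _ : Fin n => μ) {ω | ∀ i, ω i ∈ A i} = ∏ i, μ (A i) := by
  rw [show {ω : Fin n → α | ∀ i, ω i ∈ A i} = Set.univ.pi A by ext ω; simp]
  exact Measure.pi_pi _ _

lemma atom1_eq {α : Type*} (n : ℕ) (A : Set α) (S : Finset (Fin n)) :
    {ω : Fin n → α | Finset.univ.filter (fun i => ω i ∈ A) = S}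
      = Set.univ.pi (fun i => if i ∈ S then A else Aᶜ) := by
  ext ω
  simp only [Set.mem_setOf_eq, Finset.ext_iff, Finset.mem_filter, Finset.mem_univ, true_and,
    Set.mem_univ_pi]
  refine forall_congr' fun i => ?_
  by_cases h : i ∈ S <;> simp [h]

lemma atom2_eq {α : Type*} (n : ℕ) (A B : Set α) (hBA : B ⊆ A)
    (S T : Finset (Fin n)) (hTS : T ⊆ S) :
    {ω : Fin n → α | Finset.univ.filter (fun i => ω i ∈ A) = S ∧
        Finset.univ.filter (fun i => ω i ∈ B) = T}
      = Set.univ.pi (fun i => if i ∈ T then B else if i ∈ S then A \ B else Aᶜ) := by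
  ext ω
  simp only [Set.mem_setOf_eq, Finset.ext_iff, Finset.mem_filter, Finset.mem_univ, true_and,
    Set.mem_univ_pi, ← forall_and]
  refine forall_congr' fun i => ?_
  have hb : ω i ∈ B → ω i ∈ A := fun h => hBA h
  by_cases hT : i ∈ T <;> by_cases hS : i ∈ S <;>
    simp only [hT, hS, if_true, if_false, Set.mem_diff, Set.mem_compl_iff, iff_true,
      iff_false] <;>
    first
      | tauto
      | exact absurd (hTS hT) hS

lemma count_meas {α : Type*} [MeasurableSpace α] (μ : Measure α) [IsProbabilityMeasure μ]
    (n : ℕ) (A : Set α) (hA : MeasurableSet A) (m : ℕ) :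
    Measure.pi (fun _ : Fin n => μ)
        {ω | (Finset.univ.filter (fun i => ω i ∈ A)).card = m}
      = (n.choose m : ℝ≥0∞) * μ A ^ m * μ Aᶜ ^ (n - m) := by
  have hset : {ω : Fin n → α | (Finset.univ.filter (fun i => ω i ∈ A)).card = m}
      = ⋃ S ∈ Finset.powersetCard m (Finset.univ : Finset (Fin n)),
          {ω | Finset.univ.filter (fun i => ω i ∈ A) = S} := by
    ext ω
    simp only [Set.mem_setOf_eq, Set.mem_iUnion, Finset.mem_powersetCard, exists_prop]
    constructor
    · intro h
      exact ⟨_, ⟨Finset.filter_subset _ _ |>.trans (Finset.subset_univ _), h⟩, rfl⟩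
    · rintro ⟨S, ⟨-, hc⟩, rfl⟩
      exact hc
  rw [hset, measure_biUnion_finset]
  · have hterm : ∀ S ∈ Finset.powersetCard m (Finset.univ : Finset (Fin n)),
        Measure.pi (fun _ : Fin n => μ) {ω | Finset.univ.filter (fun i => ω i ∈ A) = S}
          = μ A ^ m * μ Aᶜ ^ (n - m) := by
      intro S hS
      rw [atom1_eq, Measure.pi_pi, ← Finset.prod_mul_prod_compl S]
      have h1 : ∀ i ∈ S, μ (if i ∈ S then A else Aᶜ) = μ A := fun i hi => by simp [hi]
      have h2 : ∀ i ∈ Sᶜ, μ (if i ∈ S then A else Aᶜ) = μ Aᶜ := fun i hi => by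
        simp [Finset.mem_compl.mp hi]
      rw [Finset.prod_congr rfl h1, Finset.prod_congr rfl h2, Finset.prod_const,
        Finset.prod_const, Finset.card_compl, Fintype.card_fin,
        (Finset.mem_powersetCard.mp hS).2]
    rw [Finset.sum_congr rfl hterm, Finset.sum_const, Finset.card_powersetCard,
      Finset.card_univ, Fintype.card_fin, nsmul_eq_mul]
    ring
  · intro S hS T hT hne
    refine Set.disjoint_left.mpr fun ω h1 h2 => hne ?_
    simp only [Set.mem_setOf_eq] at h1 h2
    rw [← h1, h2]
  · intro S _
    rw [atom1_eq]
    exact MeasurableSet.univ_pi fun i => by split <;> [exact hA; exact hA.compl]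

lemma pair_meas {α : Type*} [MeasurableSpace α] (μ : Measure α) [IsProbabilityMeasure μ]
    (n : ℕ) (A B : Set α) (hA : MeasurableSet A) (hB : MeasurableSet B) (hBA : B ⊆ A)
    (m k : ℕ) :
    Measure.pi (fun _ : Fin n => μ)
        {ω | (Finset.univ.filter (fun i => ω i ∈ A)).card = m ∧
             (Finset.univ.filter (fun i => ω i ∈ B)).card = k}
      = (n.choose m : ℝ≥0∞) * (m.choose k : ℝ≥0∞) * μ B ^ k * μ (A \ B) ^ (m - k)
          * μ Aᶜ ^ (n - m) := by
  set I := (Finset.powersetCard m (Finset.univ : Finset (Fin n))).sigma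
      (fun S => Finset.powersetCard k S) with hI
  have hset : {ω : Fin n → α | (Finset.univ.filter (fun i => ω i ∈ A)).card = m ∧
        (Finset.univ.filter (fun i => ω i ∈ B)).card = k}
      = ⋃ p ∈ I, {ω | Finset.univ.filter (fun i => ω i ∈ A) = p.1 ∧
          Finset.univ.filter (fun i => ω i ∈ B) = p.2} := by
    ext ω
    simp only [Set.mem_setOf_eq, Set.mem_iUnion, hI, Finset.mem_sigma,
      Finset.mem_powersetCard, exists_prop]
    constructor
    · rintro ⟨hm', hk'⟩
      refine ⟨⟨Finset.univ.filter (fun i => ω i ∈ A), Finset.univ.filter (fun i => ω i ∈ B)⟩,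
        ⟨⟨Finset.subset_univ _, hm'⟩, ?_, hk'⟩, rfl, rfl⟩
      intro i hi
      simp only [Finset.mem_filter] at hi ⊢
      exact ⟨hi.1, hBA hi.2⟩
    · rintro ⟨p, ⟨⟨-, hm'⟩, -, hk'⟩, h1, h2⟩
      exact ⟨h1 ▸ hm', h2 ▸ hk'⟩
  rw [hset, measure_biUnion_finset]
  · have hterm : ∀ p ∈ I,
        Measure.pi (fun _ : Fin n => μ)
            {ω | Finset.univ.filter (fun i => ω i ∈ A) = p.1 ∧
                 Finset.univ.filter (fun i => ω i ∈ B) = p.2}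
          = μ B ^ k * μ (A \ B) ^ (m - k) * μ Aᶜ ^ (n - m) := by
      rintro ⟨S, T⟩ hp
      simp only [hI, Finset.mem_sigma, Finset.mem_powersetCard] at hp
      obtain ⟨⟨-, hSm⟩, hTS, hTk⟩ := hp
      rw [atom2_eq n A B hBA S T hTS, Measure.pi_pi, ← Finset.prod_mul_prod_compl S,
        ← Finset.prod_sdiff hTS]
      have h1 : ∀ i ∈ T, μ (if i ∈ T then B else if i ∈ S then A \ B else Aᶜ) = μ B :=
        fun i hi => by simp [hi]
      have h2 : ∀ i ∈ S \ T, μ (if i ∈ T then B else if i ∈ S then A \ B else Aᶜ)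
          = μ (A \ B) := fun i hi => by
        obtain ⟨hiS, hiT⟩ := Finset.mem_sdiff.mp hi
        simp [hiS, hiT]
      have h3 : ∀ i ∈ Sᶜ, μ (if i ∈ T then B else if i ∈ S then A \ B else Aᶜ) = μ Aᶜ :=
        fun i hi => by
        have hiS := Finset.mem_compl.mp hi
        have hiT : i ∉ T := fun h => hiS (hTS h)
        simp [hiS, hiT]
      rw [Finset.prod_congr rfl h1, Finset.prod_congr rfl h2, Finset.prod_congr rfl h3,
        Finset.prod_const, Finset.prod_const, Finset.prod_const, Finset.card_compl,
        Fintype.card_fin, Finset.card_sdiff_of_subset hTS, hSm, hTk]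
      ring
    rw [Finset.sum_congr rfl hterm, Finset.sum_const, nsmul_eq_mul]
    have hcard : I.card = n.choose m * m.choose k := by
      rw [hI, Finset.card_sigma]
      have : ∀ S ∈ Finset.powersetCard m (Finset.univ : Finset (Fin n)),
          (Finset.powersetCard k S).card = m.choose k := fun S hS => by
        rw [Finset.card_powersetCard, (Finset.mem_powersetCard.mp hS).2]
      rw [Finset.sum_congr rfl this, Finset.sum_const, Finset.card_powersetCard,
        Finset.card_univ, Fintype.card_fin, smul_eq_mul]
    rw [hcard]
    push_cast
    ring
  · rintro ⟨S, T⟩ hp ⟨S', T'⟩ hp' hne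
    refine Set.disjoint_left.mpr fun ω h1 h2 => hne ?_
    simp only [Set.mem_setOf_eq] at h1 h2
    obtain ⟨ha, hb⟩ := h1; obtain ⟨ha', hb'⟩ := h2
    simp only [Sigma.mk.inj_iff, heq_eq_eq]
    exact ⟨ha ▸ ha', hb ▸ hb'⟩
  · rintro ⟨S, T⟩ hp
    simp only [hI, Finset.mem_sigma, Finset.mem_powersetCard] at hp
    rw [atom2_eq n A B hBA S T hp.2.1]
    exact MeasurableSet.univ_pi fun i => by
      split
      · exact hB
      · split
        · exact hA.diff hB
        · exact hA.compl

/-- **Conditional binomial distribution of accepted errors (key step of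
Proposition 1).** For `n` i.i.d. draws from `μ` on `ℝ × Bool`, with acceptance
probability `q = μ {(x,b) : x ≤ u} > 0` and conditional error rate
`Rq = μ {(x,b) : x ≤ u ∧ b = true} / q`, the joint probability that exactly `m`
examples are accepted at threshold `u` and exactly `k` of them are errors
equals the probability of `m` acceptances times the `Binomial(m, Rq)` mass at
`k`: conditional on `m` acceptances, the accepted-error count is binomial. -/
theorem accepted_errors_conditionally_binomial
    (μ : Measure (ℝ × Bool)) [IsProbabilityMeasure μ] (n : ℕ) (hn : 0 < n) (u : ℝ)
    (hq : 0 < μ {x : ℝ × Bool | x.1 ≤ u}) :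
    ∀ m : ℕ, m ≤ n → ∀ k : ℕ, k ≤ m →
      (Measure.pi fun _ : Fin n => μ)
          {ω | (Finset.univ.filter (fun i => (ω i).1 ≤ u)).card = m ∧
               (Finset.univ.filter (fun i => (ω i).1 ≤ u ∧ (ω i).2 = true)).card = k}
        = (Measure.pi fun _ : Fin n => μ)
            {ω | (Finset.univ.filter (fun i => (ω i).1 ≤ u)).card = m}
          * (m.choose k : ℝ≥0∞)
          * (μ {x : ℝ × Bool | x.1 ≤ u ∧ x.2 = true} / μ {x : ℝ × Bool | x.1 ≤ u}) ^ k
          * (1 - μ {x : ℝ × Bool | x.1 ≤ u ∧ x.2 = true} / μ {x : ℝ × Bool | x.1 ≤ u})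
              ^ (m - k) := by
  intro m hm k hk
  set A : Set (ℝ × Bool) := {x | x.1 ≤ u} with hAdef
  set B : Set (ℝ × Bool) := {x | x.1 ≤ u ∧ x.2 = true} with hBdef
  have hA : MeasurableSet A := measurableSet_le (measurable_fst.comp measurable_id) measurable_const
  have hB : MeasurableSet B := by
    have : B = A ∩ (Prod.snd ⁻¹' {true}) := by
      ext x; simp [hAdef, hBdef]
    rw [this]
    exact hA.inter (measurable_snd (measurableSet_singleton true))
  have hBA : B ⊆ A := fun x hx => hx.1
  have hpair : {ω : Fin n → ℝ × Bool |
        (Finset.univ.filter (fun i => (ω i).1 ≤ u)).card = m ∧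
        (Finset.univ.filter (fun i => (ω i).1 ≤ u ∧ (ω i).2 = true)).card = k}
      = {ω | (Finset.univ.filter (fun i => ω i ∈ A)).card = m ∧
             (Finset.univ.filter (fun i => ω i ∈ B)).card = k} := rfl
  have hcount : {ω : Fin n → ℝ × Bool |
        (Finset.univ.filter (fun i => (ω i).1 ≤ u)).card = m}
      = {ω | (Finset.univ.filter (fun i => ω i ∈ A)).card = m} := rfl
  have h2' : (Measure.pi fun _ : Fin n => μ)
      {ω | (Finset.univ.filter (fun i => (ω i).1 ≤ u)).card = m ∧
           (Finset.univ.filter (fun i => (ω i).1 ≤ u ∧ (ω i).2 = true)).card = k}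
      = (n.choose m : ℝ≥0∞) * (m.choose k : ℝ≥0∞) * μ B ^ k * μ (A \ B) ^ (m - k)
          * μ Aᶜ ^ (n - m) := by
    convert pair_meas μ n A B hA hB hBA m k using 2 <;> congr!
  have h3' : (Measure.pi fun _ : Fin n => μ)
      {ω | (Finset.univ.filter (fun i => (ω i).1 ≤ u)).card = m}
      = (n.choose m : ℝ≥0∞) * μ A ^ m * μ Aᶜ ^ (n - m) := by
    convert count_meas μ n A hA m using 2 <;> congr!
  rw [h2', h3']
  set q := μ A
  set e := μ B
  have hq0 : q ≠ 0 := hq.ne'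
  have hqt : q ≠ ⊤ := measure_ne_top μ A
  have het : e ≠ ⊤ := measure_ne_top μ B
  have heq : e ≤ q := measure_mono hBA
  have hABm : μ (A \ B) = q - e := measure_diff hBA hB.nullMeasurableSet het
  have h1me : 1 - e / q = (q - e) / q := by
    have hsum : e / q + (q - e) / q = 1 := by
      rw [ENNReal.div_add_div_same, add_tsub_cancel_of_le heq, ENNReal.div_self hq0 hqt]
    rw [← hsum, ENNReal.add_sub_cancel_left ((ENNReal.div_lt_top het hq0).ne)]
  have key : q ^ m * ((e / q) ^ k * ((q - e) / q) ^ (m - k))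
      = e ^ k * (q - e) ^ (m - k) := by
    have hqm : q ^ m = q ^ k * q ^ (m - k) := by
      rw [← pow_add, Nat.add_sub_cancel' hk]
    have hc : q * q⁻¹ = 1 := ENNReal.mul_inv_cancel hq0 hqt
    rw [hqm, div_eq_mul_inv, div_eq_mul_inv, mul_pow, mul_pow]
    calc q ^ k * q ^ (m - k) * (e ^ k * (q⁻¹) ^ k * ((q - e) ^ (m - k) * (q⁻¹) ^ (m - k)))
        = e ^ k * (q - e) ^ (m - k) * ((q * q⁻¹) ^ k * (q * q⁻¹) ^ (m - k)) := by ring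
      _ = e ^ k * (q - e) ^ (m - k) := by rw [hc]; simp
  rw [hABm, h1me]
  calc (n.choose m : ℝ≥0∞) * (m.choose k : ℝ≥0∞) * e ^ k * (q - e) ^ (m - k) * μ Aᶜ ^ (n - m)
      = (n.choose m : ℝ≥0∞) * (m.choose k : ℝ≥0∞) * μ Aᶜ ^ (n - m)
          * (e ^ k * (q - e) ^ (m - k)) := by ring
    _ = (n.choose m : ℝ≥0∞) * (m.choose k : ℝ≥0∞) * μ Aᶜ ^ (n - m)
          * (q ^ m * ((e / q) ^ k * ((q - e) / q) ^ (m - k))) := by rw [key]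
    _ = (n.choose m : ℝ≥0∞) * q ^ m * μ Aᶜ ^ (n - m) * (m.choose k : ℝ≥0∞)
          * (e / q) ^ k * ((q - e) / q) ^ (m - k) := by ring
end
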